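/- There exists a constant κ₂ > 0, depending only on the fixed profile χ̃ (in particular independent of ρ), such that for every p ∈ [1,∞], every ρ ≥ 1, and every t ≥ 0, the remainder R^χ = Δu^χ − ∂_t u^χ satisfies ‖R^χ(·,t)‖_{L^p(ℝ²)} ≤ κ₂ ρ^{2/p − 1} (1+t)^{−1} (with the convention 2/p = 0 for p = ∞). -/

import Mathlib

open MeasureTheory Filter
open scoped Classical ENNReal NNReal

noncomputable section

abbrev E2 := EuclideanSpace ℝ (Fin 2)

/-- The vector `(a, b)` in `ℝ²` (with the Euclidean norm). -/
def vec2 (a b : ℝ) : E2 := (WithLp.equiv 2 (Fin 2 → ℝ)).symm ![a, b]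

/-- `x^⊥ = (-x₂, x₁)`. -/
def perp (x : E2) : E2 := vec2 (-(x 1)) (x 0)

/-- The Oseen vortex velocity field. -/
def theta (t : ℝ) (x : E2) : E2 :=
  if x = 0 then 0 else
    ((1 - Real.exp (-(‖x‖ ^ 2) / (4 * (1 + t)))) / (2 * Real.pi * ‖x‖ ^ 2)) • perp x

/-- The Oseen vorticity (Gaussian). -/
def Xi (t : ℝ) (x : E2) : ℝ :=
  (1 / (4 * Real.pi * (1 + t))) * Real.exp (-(‖x‖ ^ 2) / (4 * (1 + t)))

/-- The `i`-th standard basis vector of `ℝ²`. -/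
def e2 (i : Fin 2) : E2 := EuclideanSpace.single i 1

/-- The truncated Oseen vortex `u^χ(x,t) = χ̃(x/ρ) Θ(x,t)`. -/
def uchi (χt : E2 → ℝ) (ρ t : ℝ) (x : E2) : E2 := χt (ρ⁻¹ • x) • theta t x


/-- The remainder `R^χ = Δu^χ - ∂ₜu^χ` of the truncated Oseen vortex,
computed componentwise (Laplacian in `x` minus time derivative). -/
def Rchi (χt : E2 → ℝ) (ρ t : ℝ) (x : E2) : E2 :=
  vec2
    ((∑ j : Fin 2, fderiv ℝ (fun y => fderiv ℝ (fun z => uchi χt ρ t z 0) y (e2 j)) x (e2 j))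
      - deriv (fun s => uchi χt ρ s x 0) t)
    ((∑ j : Fin 2, fderiv ℝ (fun y => fderiv ℝ (fun z => uchi χt ρ t z 1) y (e2 j)) x (e2 j))
      - deriv (fun s => uchi χt ρ s x 1) t)


open Real


def gf (t s : ℝ) : ℝ := (1 - Real.exp (-s / (4*(1+t)))) / (2*Real.pi*s)
def gs (t s : ℝ) : ℝ :=
  Real.exp (-s/(4*(1+t))) / (4*(1+t)) / (2*Real.pi*s)
    - (1 - Real.exp (-s/(4*(1+t)))) / (2*Real.pi*s^2)
def gss (t s : ℝ) : ℝ :=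
  -(Real.exp (-s/(4*(1+t))) / ((4*(1+t))^2 * (2*Real.pi*s)))
    - Real.exp (-s/(4*(1+t))) / ((4*(1+t)) * Real.pi * s^2)
    + (1 - Real.exp (-s/(4*(1+t)))) / (Real.pi * s^3)
def gt' (t s : ℝ) : ℝ := -Real.exp (-s/(4*(1+t))) / (8*Real.pi*(1+t)^2)

theorem hasDerivAt_gf (t s : ℝ) (hs : s ≠ 0) (ht : (1:ℝ)+t ≠ 0) :
    HasDerivAt (gf t) (gs t s) s := by
  have hτ : (4:ℝ)*(1+t) ≠ 0 := mul_ne_zero (by norm_num) ht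
  have h1 : HasDerivAt (fun s : ℝ => -s / (4*(1+t))) (-1 / (4*(1+t))) s := by
    simpa using (hasDerivAt_id s).neg.div_const (4*(1+t))
  have h2 := h1.exp
  have h3 : HasDerivAt (fun s : ℝ => 1 - Real.exp (-s/(4*(1+t))))
      (0 - Real.exp (-s/(4*(1+t))) * (-1/(4*(1+t)))) s := (hasDerivAt_const s 1).sub h2
  have h4 : HasDerivAt (fun s : ℝ => 2*Real.pi*s) (2*Real.pi) s := by
    simpa using (hasDerivAt_id s).const_mul (2*Real.pi)
  have h5 := h3.div h4 (mul_ne_zero (by positivity) hs)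
  have heq : gf t = fun s => (1 - Real.exp (-s / (4*(1+t)))) / (2*Real.pi*s) := rfl
  rw [heq]
  refine h5.congr_deriv ?_
  unfold gs
  have hπ := Real.pi_ne_zero
  field_simp
  ring

theorem hasDerivAt_gs (t s : ℝ) (hs : s ≠ 0) (ht : (1:ℝ)+t ≠ 0) :
    HasDerivAt (gs t) (gss t s) s := by
  have hτ : (4:ℝ)*(1+t) ≠ 0 := mul_ne_zero (by norm_num) ht
  have h1 : HasDerivAt (fun s : ℝ => -s / (4*(1+t))) (-1 / (4*(1+t))) s := by
    simpa using (hasDerivAt_id s).neg.div_const (4*(1+t))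
  have h2 := h1.exp
  have hA : HasDerivAt (fun s : ℝ => Real.exp (-s/(4*(1+t))) / (4*(1+t)) / (2*Real.pi*s))
      (((Real.exp (-s/(4*(1+t))) * (-1/(4*(1+t)))/(4*(1+t))) * (2*Real.pi*s)
        - Real.exp (-s/(4*(1+t))) / (4*(1+t)) * (2*Real.pi)) / (2*Real.pi*s)^2) s := by
    have h4 : HasDerivAt (fun s : ℝ => 2*Real.pi*s) (2*Real.pi) s := by
      simpa using (hasDerivAt_id s).const_mul (2*Real.pi)
    exact (h2.div_const (4*(1+t))).div h4 (mul_ne_zero (by positivity) hs)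
  have hB : HasDerivAt (fun s : ℝ => (1 - Real.exp (-s/(4*(1+t)))) / (2*Real.pi*s^2))
      (((0 - Real.exp (-s/(4*(1+t))) * (-1/(4*(1+t)))) * (2*Real.pi*s^2)
        - (1 - Real.exp (-s/(4*(1+t)))) * (2*Real.pi*(2*s))) / (2*Real.pi*s^2)^2) s := by
    have h3 : HasDerivAt (fun s : ℝ => 1 - Real.exp (-s/(4*(1+t))))
        (0 - Real.exp (-s/(4*(1+t))) * (-1/(4*(1+t)))) s := (hasDerivAt_const s 1).sub h2
    have h4 : HasDerivAt (fun s : ℝ => 2*Real.pi*s^2) (2*Real.pi*(2*s)) s := by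
      have := (hasDerivAt_pow 2 s).const_mul (2*Real.pi)
      simpa [mul_comm, mul_assoc, mul_left_comm] using this
    exact h3.div h4 (mul_ne_zero (by positivity) (pow_ne_zero 2 hs))
  have h5 := hA.sub hB
  have heq : gs t = fun s => Real.exp (-s/(4*(1+t))) / (4*(1+t)) / (2*Real.pi*s)
    - (1 - Real.exp (-s/(4*(1+t)))) / (2*Real.pi*s^2) := rfl
  rw [heq]
  refine h5.congr_deriv ?_
  unfold gss
  have hπ := Real.pi_ne_zero
  field_simp
  ring

theorem hasDerivAt_gf_time (t s : ℝ) (hs : s ≠ 0) (ht : (1:ℝ)+t ≠ 0) :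
    HasDerivAt (fun u => gf u s) (gt' t s) t := by
  have h1 : HasDerivAt (fun u : ℝ => 4*(1+u)) 4 t := by
    simpa using ((hasDerivAt_id t).const_add (1:ℝ)).const_mul (4:ℝ)
  have h2 : HasDerivAt (fun u : ℝ => -s / (4*(1+u)))
      ((0 * (4*(1+t)) - (-s) * 4) / (4*(1+t))^2) t :=
    (hasDerivAt_const t (-s)).div h1 (mul_ne_zero (by norm_num) ht)
  have h3 := ((hasDerivAt_const t (1:ℝ)).sub h2.exp).div_const (2*Real.pi*s)
  have heq : (fun u => gf u s) = fun u => (1 - Real.exp (-s / (4*(1+u)))) / (2*Real.pi*s) := rfl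
  rw [heq]
  refine h3.congr_deriv ?_
  unfold gt'
  have hπ := Real.pi_ne_zero
  field_simp
  ring

theorem heat_identity (t s : ℝ) (hs : s ≠ 0) (ht : (1:ℝ)+t ≠ 0) :
    4*s*gss t s + 8*gs t s = gt' t s := by
  unfold gss gs gt'
  have hπ := Real.pi_ne_zero
  field_simp
  ring


-- E2 basics
def pj (j : Fin 2) : E2 →L[ℝ] ℝ := EuclideanSpace.proj j
def P2 : Fin 2 → (E2 →L[ℝ] ℝ) := ![-pj 1, pj 0]
def Nsq (x : E2) : ℝ := x 0 ^ 2 + x 1 ^ 2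
def DN (x : E2) : E2 →L[ℝ] ℝ := (2 * x 0) • pj 0 + (2 * x 1) • pj 1

lemma pj_apply (j : Fin 2) (x : E2) : pj j x = x j := rfl

lemma Nsq_eq (x : E2) : Nsq x = ‖x‖ ^ 2 := by
  rw [EuclideanSpace.norm_eq, Real.sq_sqrt (by positivity)]
  simp [Nsq, Fin.sum_univ_two]

lemma Nsq_pos (x : E2) (hx : x ≠ 0) : 0 < Nsq x := by
  have h : ‖x‖ ≠ 0 := norm_ne_zero_iff.mpr hx
  rw [Nsq_eq]; positivity

lemma e2_apply (i j : Fin 2) : e2 i j = if i = j then 1 else 0 := by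
  simp [e2, EuclideanSpace.single_apply, eq_comm]

lemma DN_apply (x : E2) (j : Fin 2) : DN x (e2 j) = 2 * x j := by
  fin_cases j <;>
    simp [DN, pj_apply, e2_apply] <;> norm_num

lemma P2_apply_vec (i : Fin 2) (x : E2) : P2 i x = ![-(x 1), x 0] i := by
  fin_cases i <;> simp [P2, pj_apply]

lemma theta_apply (t : ℝ) (x : E2) (hx : x ≠ 0) (i : Fin 2) :
    theta t x i = gf t (Nsq x) * P2 i x := by
  rw [theta, if_neg hx]
  have : perp x i = P2 i x := by
    fin_cases i <;> simp [perp, vec2, P2, pj_apply]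
  rw [PiLp.smul_apply, this, smul_eq_mul, gf, Nsq_eq]

lemma uchi_apply (χt : E2 → ℝ) (ρ t : ℝ) (x : E2) (hx : x ≠ 0) (i : Fin 2) :
    uchi χt ρ t x i = χt (ρ⁻¹ • x) * (gf t (Nsq x) * P2 i x) := by
  rw [uchi, PiLp.smul_apply, smul_eq_mul, theta_apply t x hx i]

lemma hasFDerivAt_Nsq (x : E2) : HasFDerivAt Nsq (DN x) x := by
  have h0 : HasFDerivAt (fun z : E2 => z 0 * z 0) ((x 0) • pj 0 + (x 0) • pj 0) x :=
    (pj 0).hasFDerivAt.mul (pj 0).hasFDerivAt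
  have h1 : HasFDerivAt (fun z : E2 => z 1 * z 1) ((x 1) • pj 1 + (x 1) • pj 1) x :=
    (pj 1).hasFDerivAt.mul (pj 1).hasFDerivAt
  have h := h0.add h1
  have he : Nsq = fun z : E2 => z 0 * z 0 + (z 1 * z 1) := by
    funext z; simp [Nsq, sq]
  rw [he]
  refine h.congr_fderiv ?_
  unfold DN
  ext v
  simp [two_mul, add_smul]

lemma abs_coord_le (x : E2) (i : Fin 2) : |x i| ≤ ‖x‖ := by
  have h : (x i)^2 ≤ ‖x‖^2 := by
    rw [← Nsq_eq]; simp only [Nsq]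
    match i with
    | 0 => nlinarith [sq_nonneg (x 1)]
    | 1 => nlinarith [sq_nonneg (x 0)]
  calc |x i| = √((x i)^2) := by rw [Real.sqrt_sq_eq_abs]
  _ ≤ √(‖x‖^2) := Real.sqrt_le_sqrt h
  _ = ‖x‖ := by rw [Real.sqrt_sq (norm_nonneg x)]

lemma abs_P2_le (i : Fin 2) (x : E2) : |P2 i x| ≤ ‖x‖ := by
  rw [P2_apply_vec]; fin_cases i <;> simp [abs_coord_le]

lemma abs_P2_e2_le (i j : Fin 2) : |P2 i (e2 j)| ≤ 1 := by
  fin_cases i <;> fin_cases j <;> simp [P2, pj_apply, e2_apply]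

lemma norm_vec2_le (a b : ℝ) : ‖vec2 a b‖ ≤ |a| + |b| := by
  have h : ‖vec2 a b‖^2 = a^2 + b^2 := by
    rw [EuclideanSpace.norm_eq, Real.sq_sqrt (by positivity)]
    simp [vec2, Fin.sum_univ_two]
  have h2 : ‖vec2 a b‖^2 ≤ (|a| + |b|)^2 := by
    rw [h]; nlinarith [abs_nonneg a, abs_nonneg b, sq_abs a, sq_abs b, abs_mul_abs_self a]
  calc ‖vec2 a b‖ = √(‖vec2 a b‖^2) := by rw [Real.sqrt_sq (norm_nonneg _)]
  _ ≤ √((|a|+|b|)^2) := Real.sqrt_le_sqrt h2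
  _ = |a| + |b| := Real.sqrt_sq (by positivity)
open Topology in
theorem placeholder_topology : True := trivial

def psi (χt : E2 → ℝ) (j : Fin 2) (z : E2) : ℝ := fderiv ℝ χt z (e2 j)
def Psi (χt : E2 → ℝ) (j : Fin 2) (z : E2) : ℝ := fderiv ℝ (psi χt j) z (e2 j)

/-- the scaling map as a CLM -/
def Lr (ρ : ℝ) : E2 →L[ℝ] E2 := ρ⁻¹ • ContinuousLinearMap.id ℝ E2

lemma Lr_apply (ρ : ℝ) (z : E2) : Lr ρ z = ρ⁻¹ • z := rfl

lemma contDiff_psi {χt : E2 → ℝ} (hχ : ContDiff ℝ (⊤ : ℕ∞) χt) (j : Fin 2) :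
    ContDiff ℝ (⊤ : ℕ∞) (psi χt j) := by
  have h1 : ContDiff ℝ (⊤ : ℕ∞) (fderiv ℝ χt) := hχ.fderiv_right (by simp)
  exact (ContinuousLinearMap.apply ℝ ℝ (e2 j)).contDiff.comp h1

lemma hasFDerivAt_chirho {χt : E2 → ℝ} (hχ : ContDiff ℝ (⊤ : ℕ∞) χt) (ρ : ℝ) (y : E2) :
    HasFDerivAt (fun z => χt (ρ⁻¹ • z)) ((fderiv ℝ χt (ρ⁻¹ • y)).comp (Lr ρ)) y := by
  have h := (hχ.differentiable (by simp) (ρ⁻¹ • y)).hasFDerivAt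
  have hL : HasFDerivAt (fun z : E2 => ρ⁻¹ • z) (Lr ρ) y := (Lr ρ).hasFDerivAt
  exact h.comp y hL

lemma c1_eq {χt : E2 → ℝ} (hχ : ContDiff ℝ (⊤ : ℕ∞) χt) (ρ : ℝ) (j : Fin 2) (y : E2) :
    fderiv ℝ (fun z => χt (ρ⁻¹ • z)) y (e2 j) = ρ⁻¹ * psi χt j (ρ⁻¹ • y) := by
  rw [(hasFDerivAt_chirho hχ ρ y).fderiv]
  simp only [ContinuousLinearMap.comp_apply, Lr_apply, _root_.map_smul, smul_eq_mul, psi]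

lemma hasFDerivAt_c1 {χt : E2 → ℝ} (hχ : ContDiff ℝ (⊤ : ℕ∞) χt) (ρ : ℝ) (j : Fin 2) (x : E2) :
    HasFDerivAt (fun y => ρ⁻¹ * psi χt j (ρ⁻¹ • y))
      (ρ⁻¹ • ((fderiv ℝ (psi χt j) (ρ⁻¹ • x)).comp (Lr ρ))) x := by
  have hψ := ((contDiff_psi hχ j).differentiable (by simp) (ρ⁻¹ • x)).hasFDerivAt
  have hL : HasFDerivAt (fun z : E2 => ρ⁻¹ • z) (Lr ρ) x := (Lr ρ).hasFDerivAt
  exact (hψ.comp x hL).const_mul ρ⁻¹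

lemma c2_eval (χt : E2 → ℝ) (ρ : ℝ) (j : Fin 2) (x : E2) :
    (ρ⁻¹ • ((fderiv ℝ (psi χt j) (ρ⁻¹ • x)).comp (Lr ρ))) (e2 j)
      = ρ⁻¹ * (ρ⁻¹ * Psi χt j (ρ⁻¹ • x)) := by
  simp only [ContinuousLinearMap.smul_apply, ContinuousLinearMap.comp_apply, Lr_apply,
    _root_.map_smul, smul_eq_mul, Psi]

open Topology

lemma locconst_psi_Psi {χt : E2 → ℝ} {z : E2} {c : ℝ}
    (hev : χt =ᶠ[𝓝 z] (fun _ => c)) (j : Fin 2) :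
    psi χt j z = 0 ∧ Psi χt j z = 0 := by
  have h1 : fderiv ℝ χt =ᶠ[𝓝 z] fderiv ℝ (fun _ : E2 => c) := hev.fderiv
  have h2 : psi χt j =ᶠ[𝓝 z] (fun _ => 0) := by
    filter_upwards [h1] with w hw
    simp [psi, hw]
  constructor
  · simpa using h2.self_of_nhds
  · have h3 : fderiv ℝ (psi χt j) z = fderiv ℝ (fun _ : E2 => (0:ℝ)) z := h2.fderiv_eq
    simp [Psi, h3]

lemma psi_Psi_zero_lt_one {χt : E2 → ℝ} (hχ_zero : ∀ x : E2, ‖x‖ ≤ 1 → χt x = 0)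
    {z : E2} (hz : ‖z‖ < 1) (j : Fin 2) :
    psi χt j z = 0 ∧ Psi χt j z = 0 := by
  apply locconst_psi_Psi (c := 0)
  have hball : Metric.ball (0:E2) 1 ∈ 𝓝 z :=
    Metric.isOpen_ball.mem_nhds (by simpa [Metric.mem_ball, dist_zero_right] using hz)
  filter_upwards [hball] with w hw
  exact hχ_zero w (le_of_lt (by simpa [Metric.mem_ball, dist_zero_right] using hw))

lemma psi_Psi_zero_gt_two {χt : E2 → ℝ} (hχ_one : ∀ x : E2, 2 ≤ ‖x‖ → χt x = 1)
    {z : E2} (hz : 2 < ‖z‖) (j : Fin 2) :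
    psi χt j z = 0 ∧ Psi χt j z = 0 := by
  apply locconst_psi_Psi (c := 1)
  have hopen : IsOpen {w : E2 | 2 < ‖w‖} := isOpen_lt continuous_const continuous_norm
  filter_upwards [hopen.mem_nhds hz] with w hw
  exact hχ_one w (le_of_lt hw)

lemma bounded_of_vanishing (f : E2 → ℝ) (hf : Continuous f)
    (h0 : ∀ z : E2, 2 < ‖z‖ → f z = 0) : ∃ B : ℝ, 0 ≤ B ∧ ∀ z, |f z| ≤ B := by
  obtain ⟨C, hC⟩ := (isCompact_closedBall (0:E2) 2).exists_bound_of_continuousOn hf.continuousOn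
  refine ⟨max C 0, le_max_right _ _, fun z => ?_⟩
  rcases le_or_gt ‖z‖ 2 with h | h
  · exact le_trans (hC z (by simpa [Metric.mem_closedBall, dist_zero_right] using h))
      (le_max_left _ _)
  · simp [h0 z h, le_max_right]
open Topology

lemma pj_e2_self (j : Fin 2) : pj j (e2 j) = 1 := by
  fin_cases j <;> simp [pj_apply, e2_apply]

lemma first_partial {χt : E2 → ℝ} (hχ : ContDiff ℝ (⊤ : ℕ∞) χt) (ρ t : ℝ) (ht : (1:ℝ)+t ≠ 0)
    (i j : Fin 2) {y : E2} (hy : y ≠ 0) :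
    fderiv ℝ (fun z => uchi χt ρ t z i) y (e2 j)
      = (gf t (Nsq y) * P2 i y) * (ρ⁻¹ * psi χt j (ρ⁻¹ • y))
        + χt (ρ⁻¹ • y) * (gf t (Nsq y) * P2 i (e2 j)
            + P2 i y * (gs t (Nsq y) * (2 * y j))) := by
  have hNy : Nsq y ≠ 0 := ne_of_gt (Nsq_pos y hy)
  have hN := hasFDerivAt_Nsq y
  have hg := (hasDerivAt_gf t (Nsq y) hNy ht).comp_hasFDerivAt y hN
  simp only [Function.comp_def] at hg
  have hP : HasFDerivAt (fun z : E2 => P2 i z) (P2 i) y := (P2 i).hasFDerivAt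
  have hv := hg.mul hP
  have hchi := hasFDerivAt_chirho hχ ρ y
  have hu0 := hchi.mul hv
  have hev : (fun z => uchi χt ρ t z i)
      =ᶠ[𝓝 y] fun z => χt (ρ⁻¹ • z) * (gf t (Nsq z) * P2 i z) := by
    filter_upwards [isOpen_compl_singleton.mem_nhds hy] with w hw
    exact uchi_apply χt ρ t w hw i
  have hu := hu0.congr_of_eventuallyEq hev
  rw [hu.fderiv]
  simp only [ContinuousLinearMap.add_apply, ContinuousLinearMap.smul_apply,
    ContinuousLinearMap.comp_apply, Lr_apply, _root_.map_smul, smul_eq_mul, DN_apply, psi,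
    Pi.mul_apply]
  ring

lemma second_partial {χt : E2 → ℝ} (hχ : ContDiff ℝ (⊤ : ℕ∞) χt) (ρ t : ℝ) (ht : (1:ℝ)+t ≠ 0)
    (i j : Fin 2) {x : E2} (hx : x ≠ 0) :
    fderiv ℝ (fun y => fderiv ℝ (fun z => uchi χt ρ t z i) y (e2 j)) x (e2 j)
      = gf t (Nsq x) * P2 i x * (ρ⁻¹ * (ρ⁻¹ * Psi χt j (ρ⁻¹ • x)))
        + 2 * (ρ⁻¹ * psi χt j (ρ⁻¹ • x))
            * (gf t (Nsq x) * P2 i (e2 j) + P2 i x * (gs t (Nsq x) * (2 * x j)))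
        + χt (ρ⁻¹ • x) * (4 * gs t (Nsq x) * x j * P2 i (e2 j)
            + P2 i x * (4 * gss t (Nsq x) * (x j)^2 + 2 * gs t (Nsq x))) := by
  have hNx : Nsq x ≠ 0 := ne_of_gt (Nsq_pos x hx)
  have hN := hasFDerivAt_Nsq x
  have hg := (hasDerivAt_gf t (Nsq x) hNx ht).comp_hasFDerivAt x hN
  have hgs := (hasDerivAt_gs t (Nsq x) hNx ht).comp_hasFDerivAt x hN
  simp only [Function.comp_def] at hg hgs
  have hP : HasFDerivAt (fun z : E2 => P2 i z) (P2 i) x := (P2 i).hasFDerivAt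
  have hchi := hasFDerivAt_chirho hχ ρ x
  -- replace the inner function by the explicit formula near x
  have hev : (fun y => fderiv ℝ (fun z => uchi χt ρ t z i) y (e2 j))
      =ᶠ[𝓝 x] fun y => (gf t (Nsq y) * P2 i y) * (ρ⁻¹ * psi χt j (ρ⁻¹ • y))
        + χt (ρ⁻¹ • y) * (gf t (Nsq y) * P2 i (e2 j)
            + P2 i y * (gs t (Nsq y) * (2 * y j))) := by
    filter_upwards [isOpen_compl_singleton.mem_nhds hx] with w hw
    exact first_partial hχ ρ t ht i j hw
  rw [hev.fderiv_eq]
  have hA := hg.mul hP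
  have hc1 := hasFDerivAt_c1 hχ ρ j x
  have hB1 := hg.mul_const (P2 i (e2 j))
  have hyj : HasFDerivAt (fun y : E2 => 2 * y j) ((2:ℝ) • pj j) x :=
    (pj j).hasFDerivAt.const_mul 2
  have hB2 := hP.mul (hgs.mul hyj)
  have hB := hB1.add hB2
  have hD1 := (hA.mul hc1).add (hchi.mul hB)
  erw [hD1.fderiv]
  simp only [Pi.mul_apply, Pi.add_apply, ContinuousLinearMap.add_apply, ContinuousLinearMap.smul_apply,
    ContinuousLinearMap.comp_apply, Lr_apply, _root_.map_smul, smul_eq_mul, DN_apply,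
    pj_e2_self, psi, Psi]
  ring

lemma time_partial {χt : E2 → ℝ} (ρ t : ℝ) (ht : (1:ℝ)+t ≠ 0)
    (i : Fin 2) {x : E2} (hx : x ≠ 0) :
    deriv (fun s => uchi χt ρ s x i) t = χt (ρ⁻¹ • x) * (gt' t (Nsq x) * P2 i x) := by
  have hNx : Nsq x ≠ 0 := ne_of_gt (Nsq_pos x hx)
  have heq : (fun s => uchi χt ρ s x i) = fun s => χt (ρ⁻¹ • x) * (gf s (Nsq x) * P2 i x) :=
    funext fun s => uchi_apply χt ρ s x hx i
  rw [heq]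
  have h := ((hasDerivAt_gf_time t (Nsq x) hNx ht).mul_const (P2 i x)).const_mul (χt (ρ⁻¹ • x))
  rw [h.deriv]
def Rform (χt : E2 → ℝ) (ρ t : ℝ) (i : Fin 2) (x : E2) : ℝ :=
  gf t (Nsq x) * P2 i x * (ρ⁻¹ * ρ⁻¹ * (Psi χt 0 (ρ⁻¹ • x) + Psi χt 1 (ρ⁻¹ • x)))
    + 2 * (ρ⁻¹ * psi χt 0 (ρ⁻¹ • x))
        * (gf t (Nsq x) * P2 i (e2 0) + P2 i x * (gs t (Nsq x) * (2 * x 0)))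
    + 2 * (ρ⁻¹ * psi χt 1 (ρ⁻¹ • x))
        * (gf t (Nsq x) * P2 i (e2 1) + P2 i x * (gs t (Nsq x) * (2 * x 1)))

lemma Rchi_component {χt : E2 → ℝ} (hχ : ContDiff ℝ (⊤ : ℕ∞) χt) (ρ t : ℝ) (ht : (1:ℝ)+t ≠ 0)
    (i : Fin 2) {x : E2} (hx : x ≠ 0) :
    (∑ j : Fin 2, fderiv ℝ (fun y => fderiv ℝ (fun z => uchi χt ρ t z i) y (e2 j)) x (e2 j))
      - deriv (fun s => uchi χt ρ s x i) t = Rform χt ρ t i x := by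
  rw [Fin.sum_univ_two, second_partial hχ ρ t ht i 0 hx, second_partial hχ ρ t ht i 1 hx,
    time_partial ρ t ht i hx]
  have hNx : Nsq x ≠ 0 := ne_of_gt (Nsq_pos x hx)
  have hid := heat_identity t (Nsq x) hNx ht
  have hP : x 0 * P2 i (e2 0) + x 1 * P2 i (e2 1) = P2 i x := by
    fin_cases i <;> simp [P2, pj_apply, e2_apply] <;> ring
  have hNdef : (x 0)^2 + (x 1)^2 = Nsq x := rfl
  unfold Rform
  linear_combination (χt (ρ⁻¹ • x) * P2 i x) * hid
    + (4 * χt (ρ⁻¹ • x) * gs t (Nsq x)) * hP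
    + (4 * χt (ρ⁻¹ • x) * P2 i x * gss t (Nsq x)) * hNdef

lemma Rchi_eq {χt : E2 → ℝ} (hχ : ContDiff ℝ (⊤ : ℕ∞) χt) (ρ t : ℝ) (ht : (1:ℝ)+t ≠ 0)
    {x : E2} (hx : x ≠ 0) :
    Rchi χt ρ t x = vec2 (Rform χt ρ t 0 x) (Rform χt ρ t 1 x) := by
  rw [Rchi, Rchi_component hχ ρ t ht 0 hx, Rchi_component hχ ρ t ht 1 hx]
lemma exp_facts (t s : ℝ) (ht : 0 ≤ t) (hs : 0 < s) :
    0 < Real.exp (-s/(4*(1+t))) ∧ Real.exp (-s/(4*(1+t))) ≤ 1 ∧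
      (1 - Real.exp (-s/(4*(1+t)))) * (4*(1+t)) ≤ s := by
  have hτ : (0:ℝ) < 4*(1+t) := by linarith
  refine ⟨Real.exp_pos _, ?_, ?_⟩
  · rw [Real.exp_le_one_iff, neg_div]
    exact neg_nonpos.mpr (by positivity)
  · have h := Real.add_one_le_exp (-s/(4*(1+t)))
    have hnd : -s/(4*(1+t)) = -(s/(4*(1+t))) := neg_div _ _
    have h2 : 1 - Real.exp (-s/(4*(1+t))) ≤ s/(4*(1+t)) := by linarith
    calc (1 - Real.exp (-s/(4*(1+t)))) * (4*(1+t)) ≤ (s/(4*(1+t))) * (4*(1+t)) := by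
          apply mul_le_mul_of_nonneg_right h2 hτ.le
    _ = s := by field_simp

lemma gf_bound (t s : ℝ) (ht : 0 ≤ t) (hs : 0 < s) : |gf t s| ≤ 1/(1+t) := by
  obtain ⟨hE0, hE1, hE2⟩ := exp_facts t s ht hs
  have hπ := Real.pi_gt_three
  have h1t : (0:ℝ) < 1+t := by linarith
  have hden : (0:ℝ) < 2*Real.pi*s := by positivity
  have hnn : 0 ≤ gf t s := div_nonneg (by linarith) hden.le
  have hπs : 3*s ≤ Real.pi*s := mul_le_mul_of_nonneg_right hπ.le hs.le
  rw [abs_of_nonneg hnn, gf, div_le_div_iff₀ hden h1t]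
  nlinarith [hE2, hπs, hs]

lemma gs_bound (t s : ℝ) (ht : 0 ≤ t) (hs : 0 < s) : s * |gs t s| ≤ 1/(1+t) := by
  obtain ⟨hE0, hE1, hE2⟩ := exp_facts t s ht hs
  have hπ := Real.pi_gt_three
  have hπ0 := Real.pi_pos
  have h1t : (0:ℝ) < 1+t := by linarith
  set E := Real.exp (-s/(4*(1+t))) with hE
  have habs : |gs t s| ≤ E/(4*(1+t))/(2*Real.pi*s) + (1-E)/(2*Real.pi*s^2) := by
    refine le_trans (abs_sub _ _) ?_
    rw [abs_of_nonneg (by positivity), abs_of_nonneg (div_nonneg (by linarith) (by positivity))]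
  have h1 : s * (E/(4*(1+t))/(2*Real.pi*s)) = E/(8*Real.pi*(1+t)) := by
    field_simp; ring
  have h2 : s * ((1-E)/(2*Real.pi*s^2)) = (1-E)/(2*Real.pi*s) := by
    field_simp
  have h3 : (1-E)/(2*Real.pi*s) ≤ 1/(8*Real.pi*(1+t)) := by
    rw [div_le_div_iff₀ (by positivity) (by positivity)]
    nlinarith [mul_le_mul_of_nonneg_right hE2 (by positivity : (0:ℝ) ≤ 2*Real.pi)]
  have h4 : E/(8*Real.pi*(1+t)) ≤ 1/(8*Real.pi*(1+t)) := by gcongr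
  calc s * |gs t s| ≤ s * (E/(4*(1+t))/(2*Real.pi*s) + (1-E)/(2*Real.pi*s^2)) := by
        exact mul_le_mul_of_nonneg_left habs hs.le
  _ = E/(8*Real.pi*(1+t)) + (1-E)/(2*Real.pi*s) := by rw [mul_add, h1, h2]
  _ ≤ 1/(8*Real.pi*(1+t)) + 1/(8*Real.pi*(1+t)) := add_le_add h4 h3
  _ ≤ 1/(1+t) := by
    rw [div_add_div _ _ (by positivity) (by positivity), div_le_div_iff₀ (by positivity) h1t]
    nlinarith
lemma Rform_zero {χt : E2 → ℝ} (hχ_one : ∀ x : E2, 2 ≤ ‖x‖ → χt x = 1)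
    (ρ t : ℝ) (hρ : 0 < ρ) (i : Fin 2) {x : E2} (hx : 2*ρ < ‖x‖) :
    Rform χt ρ t i x = 0 := by
  have hw : 2 < ‖ρ⁻¹ • x‖ := by
    rw [norm_smul, Real.norm_eq_abs, abs_of_pos (inv_pos.mpr hρ)]
    rw [lt_inv_mul_iff₀ hρ]
    linarith
  have h0 := psi_Psi_zero_gt_two hχ_one hw 0
  have h1 := psi_Psi_zero_gt_two hχ_one hw 1
  rw [Rform, h0.1, h0.2, h1.1, h1.2]
  ring

lemma Rform_bound {χt : E2 → ℝ} (B ρ t : ℝ) (hB : 1 ≤ B)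
    (hψ : ∀ (j : Fin 2) (z : E2), |psi χt j z| ≤ B)
    (hΨ : ∀ (j : Fin 2) (z : E2), |Psi χt j z| ≤ B)
    (hρ : 1 ≤ ρ) (ht : 0 ≤ t) (i : Fin 2) {x : E2} (hx : x ≠ 0) (hx2 : ‖x‖ ≤ 2*ρ) :
    |Rform χt ρ t i x| ≤ 16*B/(ρ*(1+t)) := by
  have hρ0 : (0:ℝ) < ρ := by linarith
  have h1t : (0:ℝ) < 1+t := by linarith
  have hs : 0 < Nsq x := Nsq_pos x hx
  have hxx : ‖x‖ * ‖x‖ = Nsq x := by rw [Nsq_eq]; ring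
  have hgf := gf_bound t (Nsq x) ht hs
  have hgs := gs_bound t (Nsq x) ht hs
  set w := ρ⁻¹ • x
  -- bound of the inner bracket for j = 0, 1
  have hbr : ∀ j : Fin 2,
      |gf t (Nsq x) * P2 i (e2 j) + P2 i x * (gs t (Nsq x) * (2 * x j))| ≤ 3/(1+t) := by
    intro j
    have h1 : |gf t (Nsq x) * P2 i (e2 j)| ≤ 1/(1+t) := by
      rw [abs_mul]
      calc |gf t (Nsq x)| * |P2 i (e2 j)| ≤ (1/(1+t)) * 1 := by
            apply mul_le_mul hgf (abs_P2_e2_le i j) (abs_nonneg _) (by positivity)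
      _ = 1/(1+t) := by ring
    have h2 : |P2 i x * (gs t (Nsq x) * (2 * x j))| ≤ 2/(1+t) := by
      rw [abs_mul, abs_mul, abs_mul, abs_two]
      have hp2 := abs_P2_le i x
      have hxj := abs_coord_le x j
      have hPX : |P2 i x| * |x j| ≤ ‖x‖ * ‖x‖ :=
        mul_le_mul hp2 hxj (abs_nonneg _) (norm_nonneg _)
      have h5 : |gs t (Nsq x)| * (|P2 i x| * |x j|) ≤ |gs t (Nsq x)| * (‖x‖*‖x‖) :=
        mul_le_mul_of_nonneg_left hPX (abs_nonneg _)
      have h6 : |gs t (Nsq x)| * (‖x‖*‖x‖) ≤ 1/(1+t) := by rw [hxx, mul_comm]; exact hgs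
      calc |P2 i x| * (|gs t (Nsq x)| * (2 * |x j|))
          = 2*(|gs t (Nsq x)| * (|P2 i x| * |x j|)) := by ring
      _ ≤ 2*(1/(1+t)) := by linarith [h5, h6]
      _ = 2/(1+t) := by ring
    calc _ ≤ |gf t (Nsq x) * P2 i (e2 j)| + |P2 i x * (gs t (Nsq x) * (2 * x j))| :=
          abs_add_le _ _
    _ ≤ 1/(1+t) + 2/(1+t) := add_le_add h1 h2
    _ = 3/(1+t) := by ring
  have hterm1 : |gf t (Nsq x) * P2 i x * (ρ⁻¹ * ρ⁻¹ * (Psi χt 0 w + Psi χt 1 w))|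
      ≤ (1/(1+t)) * (2*ρ) * (ρ⁻¹ * ρ⁻¹ * (2*B)) := by
    rw [abs_mul, abs_mul, abs_mul, abs_mul]
    have hiv : |ρ⁻¹| = ρ⁻¹ := abs_of_pos (inv_pos.mpr hρ0)
    rw [hiv]
    have hΨs : |Psi χt 0 w + Psi χt 1 w| ≤ 2*B := by
      calc |Psi χt 0 w + Psi χt 1 w| ≤ |Psi χt 0 w| + |Psi χt 1 w| := abs_add_le _ _
      _ ≤ B + B := add_le_add (hΨ 0 w) (hΨ 1 w)
      _ = 2*B := by ring
    apply mul_le_mul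
    · exact mul_le_mul hgf ((abs_P2_le i x).trans hx2) (abs_nonneg _) (by positivity)
    · exact mul_le_mul_of_nonneg_left hΨs (by positivity)
    · positivity
    · positivity
  have hterm : ∀ j : Fin 2,
      |2 * (ρ⁻¹ * psi χt j w) * (gf t (Nsq x) * P2 i (e2 j)
        + P2 i x * (gs t (Nsq x) * (2 * x j)))| ≤ 2 * (ρ⁻¹ * B) * (3/(1+t)) := by
    intro j
    rw [abs_mul, abs_mul, abs_mul, abs_two]
    have hiv : |ρ⁻¹| = ρ⁻¹ := abs_of_pos (inv_pos.mpr hρ0)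
    rw [hiv]
    apply mul_le_mul
    · exact mul_le_mul_of_nonneg_left
        (mul_le_mul_of_nonneg_left (hψ j w) (by positivity)) (by norm_num)
    · exact hbr j
    · exact abs_nonneg _
    · positivity
  have hsum : (1/(1+t)) * (2*ρ) * (ρ⁻¹ * ρ⁻¹ * (2*B)) + 2 * (ρ⁻¹ * B) * (3/(1+t))
      + 2 * (ρ⁻¹ * B) * (3/(1+t)) ≤ 16*B/(ρ*(1+t)) := by
    have h1 : (1/(1+t)) * (2*ρ) * (ρ⁻¹ * ρ⁻¹ * (2*B)) = 4*B/(ρ*(1+t)) := by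
      field_simp; ring
    have h2 : 2 * (ρ⁻¹ * B) * (3/(1+t)) = 6*B/(ρ*(1+t)) := by field_simp; ring
    rw [h1, h2]
    rw [← add_div, ← add_div, div_le_div_iff₀ (by positivity) (by positivity)]
    nlinarith
  calc |Rform χt ρ t i x| ≤ _ := by
        rw [Rform]
        exact (abs_add_le _ _).trans (add_le_add ((abs_add_le _ _).trans
          (add_le_add hterm1 (hterm 0))) (hterm 1))
  _ ≤ 16*B/(ρ*(1+t)) := hsum
theorem truncated_oseen_remainder_Lp_bound
    (χt : E2 → ℝ) (hχ_smooth : ContDiff ℝ (⊤ : ℕ∞) χt)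
    (hχ_radial : ∀ x y : E2, ‖x‖ = ‖y‖ → χt x = χt y)
    (hχ_zero : ∀ x : E2, ‖x‖ ≤ 1 → χt x = 0)
    (hχ_one : ∀ x : E2, 2 ≤ ‖x‖ → χt x = 1)
    (hχ_range : ∀ x : E2, χt x ∈ Set.Icc (0 : ℝ) 1) :
    ∃ κ₂ : ℝ, 0 < κ₂ ∧ ∀ p : ℝ≥0∞, 1 ≤ p → ∀ ρ : ℝ, 1 ≤ ρ → ∀ t : ℝ, 0 ≤ t →
      eLpNorm (Rchi χt ρ t) p (volume : Measure E2)
        ≤ ENNReal.ofReal (κ₂ * ρ ^ (2 * (p⁻¹).toReal - 1) / (1 + t)) := by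
  -- global bounds on the cutoff derivatives
  obtain ⟨B0, hB00, hB0⟩ := bounded_of_vanishing (psi χt 0)
    (contDiff_psi hχ_smooth 0).continuous
    (fun z hz => (psi_Psi_zero_gt_two hχ_one hz 0).1)
  obtain ⟨B1, hB10, hB1⟩ := bounded_of_vanishing (psi χt 1)
    (contDiff_psi hχ_smooth 1).continuous
    (fun z hz => (psi_Psi_zero_gt_two hχ_one hz 1).1)
  obtain ⟨B2, hB20, hB2⟩ := bounded_of_vanishing (Psi χt 0)
    (contDiff_psi (contDiff_psi hχ_smooth 0) 0).continuous
    (fun z hz => (psi_Psi_zero_gt_two hχ_one hz 0).2)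
  obtain ⟨B3, hB30, hB3⟩ := bounded_of_vanishing (Psi χt 1)
    (contDiff_psi (contDiff_psi hχ_smooth 1) 1).continuous
    (fun z hz => (psi_Psi_zero_gt_two hχ_one hz 1).2)
  set B : ℝ := max 1 (max (max B0 B1) (max B2 B3)) with hBdef
  have hB : 1 ≤ B := le_max_left _ _
  have hψ : ∀ (j : Fin 2) (z : E2), |psi χt j z| ≤ B := by
    intro j z
    fin_cases j
    · exact (hB0 z).trans (le_trans (le_trans (le_max_left _ _) (le_max_left _ _))
        (le_max_right _ _))
    · exact (hB1 z).trans (le_trans (le_trans (le_max_right _ _) (le_max_left _ _))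
        (le_max_right _ _))
  have hΨ : ∀ (j : Fin 2) (z : E2), |Psi χt j z| ≤ B := by
    intro j z
    fin_cases j
    · exact (hB2 z).trans (le_trans (le_trans (le_max_left _ _) (le_max_right _ _))
        (le_max_right _ _))
    · exact (hB3 z).trans (le_trans (le_trans (le_max_right _ _) (le_max_right _ _))
        (le_max_right _ _))
  have hπ0 := Real.pi_pos
  have hπ3 := Real.pi_gt_three
  refine ⟨128 * Real.pi * B, by positivity, ?_⟩
  intro p hp ρ hρ t ht
  have hρ0 : (0:ℝ) < ρ := lt_of_lt_of_le one_pos hρ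
  have h1t : (0:ℝ) < 1+t := by linarith
  set M : ℝ := 32*B/(ρ*(1+t)) with hMdef
  have hM0 : 0 ≤ M := by positivity
  -- a.e. pointwise bound
  have hz0 : volume ({(0:E2)} : Set E2) = 0 := by
    rw [← Metric.closedBall_zero (x := (0:E2)), EuclideanSpace.volume_closedBall]
    simp
  have h0 : ∀ᵐ x : E2, x ≠ (0:E2) := by
    rw [ae_iff]
    simpa [not_not, Set.setOf_eq_eq_singleton] using hz0
  have hae : ∀ᵐ x : E2, ‖Rchi χt ρ t x‖
      ≤ ‖(Metric.closedBall (0:E2) (2*ρ)).indicator (fun _ => M) x‖ := by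
    filter_upwards [h0] with x hx
    rw [Rchi_eq hχ_smooth ρ t (ne_of_gt h1t) hx]
    rcases le_or_gt ‖x‖ (2*ρ) with hle | hgt
    · have hind : (Metric.closedBall (0:E2) (2*ρ)).indicator (fun _ => M) x = M :=
        Set.indicator_of_mem (by simpa [Metric.mem_closedBall, dist_zero_right] using hle) _
      rw [hind, Real.norm_eq_abs, abs_of_nonneg hM0]
      calc ‖vec2 (Rform χt ρ t 0 x) (Rform χt ρ t 1 x)‖
          ≤ |Rform χt ρ t 0 x| + |Rform χt ρ t 1 x| := norm_vec2_le _ _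
      _ ≤ 16*B/(ρ*(1+t)) + 16*B/(ρ*(1+t)) :=
          add_le_add (Rform_bound B ρ t hB hψ hΨ hρ ht 0 hx hle)
            (Rform_bound B ρ t hB hψ hΨ hρ ht 1 hx hle)
      _ = M := by rw [hMdef]; ring
    · rw [Rform_zero hχ_one ρ t hρ0 0 hgt, Rform_zero hχ_one ρ t hρ0 1 hgt]
      have h00 : ‖vec2 (0:ℝ) 0‖ ≤ 0 := by simpa using norm_vec2_le 0 0
      exact le_trans h00 (norm_nonneg _)
  -- volume of the ball
  have hvol : volume (Metric.closedBall (0:E2) (2*ρ)) = ENNReal.ofReal (4*Real.pi*ρ^2) := by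
    rw [EuclideanSpace.volume_closedBall]
    rw [← ENNReal.ofReal_pow (by positivity), ← ENNReal.ofReal_mul (by positivity)]
    congr 1
    have hG : Real.Gamma ((Fintype.card (Fin 2) : ℝ)/2 + 1) = 1 := by
      norm_num [Fintype.card_fin, Real.Gamma_two]
    have hs : Real.sqrt Real.pi ^ (Fintype.card (Fin 2)) = Real.pi := by
      norm_num [Fintype.card_fin]
      exact Real.sq_sqrt hπ0.le
    rw [hG, hs]
    norm_num [Fintype.card_fin]
    ring
  -- exponent bookkeeping
  set r : ℝ := 1/p.toReal with hrdef
  have hrinv : (p⁻¹).toReal = r := by rw [ENNReal.toReal_inv, hrdef, one_div]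
  have hr0 : 0 ≤ r := by rw [hrdef]; positivity
  have hr1 : r ≤ 1 := by
    rcases eq_or_ne p ⊤ with hpt | hpt
    · simp [hrdef, hpt]
    · have h1p : (1:ℝ) ≤ p.toReal := by
        have := ENNReal.toReal_mono hpt hp
        simpa using this
      rw [hrdef]
      rw [div_le_one (by linarith)]
      linarith
  calc eLpNorm (Rchi χt ρ t) p volume
      ≤ eLpNorm ((Metric.closedBall (0:E2) (2*ρ)).indicator (fun _ => M)) p volume :=
        eLpNorm_mono_ae hae
  _ ≤ ‖M‖₊ * (volume (Metric.closedBall (0:E2) (2*ρ))) ^ (1/p.toReal) :=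
        eLpNorm_indicator_const_le _ _
  _ ≤ ENNReal.ofReal (128 * Real.pi * B * ρ ^ (2 * (p⁻¹).toReal - 1) / (1 + t)) := by
    rw [hvol, hrinv, ← hrdef]
    rw [ENNReal.ofReal_rpow_of_pos (by positivity)]
    rw [← ENNReal.ofReal_coe_nnreal, coe_nnnorm, Real.norm_eq_abs, abs_of_nonneg hM0,
      ← ENNReal.ofReal_mul hM0]
    apply ENNReal.ofReal_le_ofReal
    -- real arithmetic
    have hmul : (4*Real.pi*ρ^2) ^ r = (4*Real.pi)^r * ρ^(2*r) := by
      rw [Real.mul_rpow (by positivity) (by positivity)]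
      congr 1
      rw [← Real.rpow_natCast ρ 2, ← Real.rpow_mul hρ0.le]
      norm_num
    have h4 : (4*Real.pi)^r ≤ 4*Real.pi := by
      calc (4*Real.pi)^r ≤ (4*Real.pi)^(1:ℝ) :=
            Real.rpow_le_rpow_of_exponent_le (by nlinarith) hr1
      _ = 4*Real.pi := Real.rpow_one _
    have hX0 : (0:ℝ) < ρ^(2*r) := Real.rpow_pos_of_pos hρ0 _
    have hsub : ρ ^ (2*r - 1) = ρ^(2*r) / ρ := by
      rw [Real.rpow_sub hρ0, Real.rpow_one]
    rw [hmul, hsub, hMdef]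
    have hL : 32 * B / (ρ * (1 + t)) * ((4 * Real.pi) ^ r * ρ ^ (2 * r))
        = (32 * B * ((4 * Real.pi) ^ r * ρ ^ (2 * r))) / (ρ * (1 + t)) := by ring
    have hR : 128 * Real.pi * B * (ρ ^ (2 * r) / ρ) / (1 + t)
        = (128 * Real.pi * B * ρ ^ (2 * r)) / (ρ * (1 + t)) := by
      field_simp
    rw [hL, hR, div_le_div_iff₀ (by positivity) (by positivity)]
    nlinarith [mul_le_mul_of_nonneg_right h4
      (by positivity : (0:ℝ) ≤ 32*B*(ρ^(2*r))*(ρ*(1+t))), hX0.le,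
      mul_pos hρ0 h1t]
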